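/- Let w ∈ ℂ, λ ∈ ℂ with λ ≠ 0, and let h, x : ℂ → ℂ be analytic at w. Define, for z ≠ w, u(z) = −1/(z−w) + h(z), A(z) = [[u(z), λ],[1, −u(z)]], g(z) = [[1, 0],[−λ^{−1}/(z−w), 1]], and D(z) = [[0, 0],[λ^{−1}/(z−w), 0]] (which equals λ·∂_λ g(z)). Then for all z ≠ w in a punctured neighborhood of w, B(z) := g(z)A(z)g(z)^{−1} − g′(z)g(z)^{−1} − x(z)·D(z)g(z)^{−1} = [[h(z), λ],[1 − λ^{−1}(2h(z)+x(z))/(z−w), −h(z)]]. Consequently B(z) + λ^{−1}(2h(w)+x(w))/(z−w)·E₂₁ extends analytically to w (E₂₁ the elementary matrix with 1 in position (2,1)), and B extends analytically to w if and only if h(w) + x(w)/2 = 0. -/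

import Mathlib

/-!
Conjugating by the unipotent `g` moves the pole of `u` off the diagonal: `g A g⁻¹` has
diagonal `±h`, and together with `-g′g⁻¹ - x D g⁻¹` all singular terms collect in the
`(2,1)`-entry `1 - λ⁻¹(2h + x)/(z - w)`. Writing `2h + x = (2h + x)(w) + (z - w)·dslope`,
the singular part of `B` is exactly `λ⁻¹(2h(w) + x(w))/(z - w)·E₂₁`, and a simple pole
`c/(z - w)` that agrees near `w` with a function continuous at `w` has `c = 0`.
-/

open Topology

/-- The gauge matrix `g(z) = [[1, 0], [-λ⁻¹/(z-w), 1]]`. -/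
noncomputable def gMat (w lam : ℂ) (z : ℂ) : Matrix (Fin 2) (Fin 2) ℂ :=
  !![1, 0; -lam⁻¹ / (z - w), 1]

/-- The entrywise derivative `g′(z)` of `g`. -/
noncomputable def gMat' (w lam : ℂ) (z : ℂ) : Matrix (Fin 2) (Fin 2) ℂ :=
  Matrix.of fun i j => deriv (fun s => gMat w lam s i j) z

/-- `D(z) = [[0, 0], [λ⁻¹/(z-w), 0]]` (which equals `λ·∂_λ g(z)`). -/
noncomputable def DMat (w lam : ℂ) (z : ℂ) : Matrix (Fin 2) (Fin 2) ℂ :=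
  !![0, 0; lam⁻¹ / (z - w), 0]

/-- The Miura connection matrix `A(z) = [[u(z), λ], [1, -u(z)]]` with
`u(z) = -1/(z-w) + h(z)`. -/
noncomputable def AMat (w lam : ℂ) (h : ℂ → ℂ) (z : ℂ) : Matrix (Fin 2) (Fin 2) ℂ :=
  !![-1 / (z - w) + h z, lam; 1, -(-1 / (z - w) + h z)]

/-- The affine gauge transform `B = g A g⁻¹ - g′ g⁻¹ - x·D g⁻¹`. -/
noncomputable def BMat (w lam : ℂ) (h x : ℂ → ℂ) (z : ℂ) : Matrix (Fin 2) (Fin 2) ℂ :=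
  gMat w lam z * AMat w lam h z * (gMat w lam z)⁻¹
    - gMat' w lam z * (gMat w lam z)⁻¹
    - x z • (DMat w lam z * (gMat w lam z)⁻¹)

theorem Matrix.inv_lowerUnitriangular_fin_two {R : Type*} [CommRing R] (c : R) :
    (!![1, 0; c, 1] : Matrix (Fin 2) (Fin 2) R)⁻¹ = !![1, 0; -c, 1] :=
  Matrix.inv_eq_right_inv (by simp [Matrix.one_fin_two])

theorem AnalyticAt.dslope {𝕜 E : Type*} [NontriviallyNormedField 𝕜] [NormedAddCommGroup E]
    [NormedSpace 𝕜 E] {f : 𝕜 → E} {a : 𝕜} (hf : AnalyticAt 𝕜 f a) :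
    AnalyticAt 𝕜 (dslope f a) a :=
  let ⟨_, hp⟩ := hf
  ⟨_, hp.has_fpower_series_dslope_fslope⟩

theorem eq_zero_of_eventuallyEq_add_div_sub {𝕜 : Type*} [NontriviallyNormedField 𝕜]
    {f g : 𝕜 → 𝕜} {w c : 𝕜} (hf : ContinuousAt f w) (hg : ContinuousAt g w)
    (hfg : ∀ᶠ z in 𝓝[≠] w, f z = g z + c / (z - w)) : c = 0 := by
  have hlim : Filter.Tendsto (fun z => (f z - g z) * (z - w)) (𝓝[≠] w) (𝓝 0) := by
    have hcont : ContinuousAt (fun z => (f z - g z) * (z - w)) w :=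
      (hf.sub hg).mul (continuousAt_id.sub continuousAt_const)
    simpa using hcont.tendsto.mono_left nhdsWithin_le_nhds
  have hconst : (fun z => (f z - g z) * (z - w)) =ᶠ[𝓝[≠] w] fun _ => c := by
    filter_upwards [hfg, self_mem_nhdsWithin] with z hz hne
    rw [hz, add_sub_cancel_left, div_mul_cancel₀ _ (sub_ne_zero.mpr hne)]
  exact tendsto_nhds_unique (tendsto_const_nhds.congr' hconst.symm) hlim

theorem hasDerivAt_const_div_sub {𝕜 : Type*} [NontriviallyNormedField 𝕜] (a w : 𝕜) {z : 𝕜}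
    (hz : z ≠ w) : HasDerivAt (fun s => a / (s - w)) (-a / (z - w) ^ 2) z := by
  have hd : HasDerivAt (fun s => s - w) 1 z := (hasDerivAt_id' z).sub_const w
  exact ((hasDerivAt_const z a).div hd (sub_ne_zero.mpr hz)).congr_deriv (by ring)

theorem gMat_inv (w lam z : ℂ) : (gMat w lam z)⁻¹ = !![1, 0; lam⁻¹ / (z - w), 1] := by
  rw [gMat, Matrix.inv_lowerUnitriangular_fin_two, neg_div, neg_neg]

theorem gMat'_of_ne {w z : ℂ} (lam : ℂ) (hz : z ≠ w) :
    gMat' w lam z = !![0, 0; lam⁻¹ / (z - w) ^ 2, 0] := by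
  ext i j
  fin_cases i <;> fin_cases j
  · simp [gMat', gMat]
  · simp [gMat', gMat]
  · simpa [gMat', gMat] using (hasDerivAt_const_div_sub (-lam⁻¹) w hz).deriv
  · simp [gMat', gMat]

theorem BMat_of_ne {w lam z : ℂ} (hlam : lam ≠ 0) (h x : ℂ → ℂ) (hz : z ≠ w) :
    BMat w lam h x z = !![h z, lam; 1 - lam⁻¹ * (2 * h z + x z) / (z - w), -h z] := by
  have hzw : z - w ≠ 0 := sub_ne_zero.mpr hz
  rw [BMat, gMat_inv, gMat'_of_ne lam hz, gMat, AMat, DMat]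
  simp only [Matrix.mul_fin_two, Matrix.smul_of]
  ext i j
  fin_cases i <;> fin_cases j <;>
    simp only [one_mul, mul_one, add_zero, zero_mul, mul_zero, zero_add, sub_zero, sub_self,
      neg_add_rev, smul_eq_mul, Matrix.of_sub_of, Matrix.sub_cons, Matrix.smul_cons,
      Matrix.head_cons, Matrix.tail_cons, Matrix.zero_empty, Matrix.smul_empty, Fin.zero_eta,
      Fin.mk_one, Fin.isValue, Matrix.sub_apply, Matrix.of_apply, Matrix.cons_val',
      Matrix.cons_val_zero, Matrix.cons_val_one, Matrix.cons_val_fin_one] <;>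
    field_simp <;> ring

noncomputable def BMatReg (w lam : ℂ) (h x : ℂ → ℂ) (z : ℂ) : Matrix (Fin 2) (Fin 2) ℂ :=
  !![h z, lam; 1 - lam⁻¹ * dslope (fun s => 2 * h s + x s) w z, -h z]

theorem analyticAt_BMatReg_apply {w : ℂ} (lam : ℂ) {h x : ℂ → ℂ} (hh : AnalyticAt ℂ h w)
    (hx : AnalyticAt ℂ x w) (i j : Fin 2) : AnalyticAt ℂ (fun z => BMatReg w lam h x z i j) w := by
  have hslope : AnalyticAt ℂ (dslope (fun s => 2 * h s + x s) w) w :=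
    ((analyticAt_const.mul hh).add hx).dslope
  fin_cases i <;> fin_cases j
  · exact hh
  · exact analyticAt_const
  · exact analyticAt_const.sub (analyticAt_const.mul hslope)
  · exact hh.neg

theorem BMatReg_eq_of_ne {w lam z : ℂ} (hlam : lam ≠ 0) (h x : ℂ → ℂ) (hz : z ≠ w) :
    BMatReg w lam h x z
      = BMat w lam h x z + (lam⁻¹ * (2 * h w + x w) / (z - w)) • !![0, 0; 1, 0] := by
  rw [BMat_of_ne hlam h x hz, BMatReg, dslope_of_ne _ hz, slope_def_field]
  ext i j
  fin_cases i <;> fin_cases j <;> simp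
  ring

theorem affine_gauge_regular_iff_bethe_at_simple_pole (w lam : ℂ) (hlam : lam ≠ 0)
    (h x : ℂ → ℂ) (hh : AnalyticAt ℂ h w) (hx : AnalyticAt ℂ x w) :
    -- the explicit form of the affine gauge transform near w
    (∀ᶠ z in 𝓝[≠] w,
      BMat w lam h x z
        = !![h z, lam; 1 - lam⁻¹ * (2 * h z + x z) / (z - w), -h z]) ∧
    -- after adding λ⁻¹(2h(w)+x(w))/(z-w)·E₂₁, it extends analytically to w
    (∃ G : ℂ → Matrix (Fin 2) (Fin 2) ℂ,
      (∀ i j, AnalyticAt ℂ (fun z => G z i j) w) ∧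
      ∀ᶠ z in 𝓝[≠] w,
        G z = BMat w lam h x z
          + (lam⁻¹ * (2 * h w + x w) / (z - w)) • !![0, 0; 1, 0]) ∧
    -- B itself extends analytically to w iff h(w) + x(w)/2 = 0
    ((∃ G : ℂ → Matrix (Fin 2) (Fin 2) ℂ,
      (∀ i j, AnalyticAt ℂ (fun z => G z i j) w) ∧
      ∀ᶠ z in 𝓝[≠] w, G z = BMat w lam h x z) ↔ h w + x w / 2 = 0) := by
  have hReg : ∀ᶠ z in 𝓝[≠] w, BMatReg w lam h x z
      = BMat w lam h x z + (lam⁻¹ * (2 * h w + x w) / (z - w)) • !![0, 0; 1, 0] :=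
    eventually_mem_nhdsWithin.mono fun z hz => BMatReg_eq_of_ne hlam h x hz
  refine ⟨eventually_mem_nhdsWithin.mono fun z hz => BMat_of_ne hlam h x hz,
    ⟨_, analyticAt_BMatReg_apply lam hh hx, hReg⟩, ⟨?_, fun hbethe => ?_⟩⟩
  · rintro ⟨G, hG, hGB⟩
    have hres : lam⁻¹ * (2 * h w + x w) = 0 := by
      refine eq_zero_of_eventuallyEq_add_div_sub
        (analyticAt_BMatReg_apply lam hh hx 1 0).continuousAt (hG 1 0).continuousAt ?_
      filter_upwards [hReg, hGB] with z hzReg hzG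
      simp [hzReg, hzG]
    have hsum : 2 * h w + x w = 0 := (mul_eq_zero.mp hres).resolve_left (inv_ne_zero hlam)
    linear_combination hsum / 2
  · refine ⟨_, analyticAt_BMatReg_apply lam hh hx, ?_⟩
    have hsum : 2 * h w + x w = 0 := by linear_combination 2 * hbethe
    filter_upwards [hReg] with z hz
    simp [hz, hsum]
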